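/- arXiv:1703.04749 — 2 statements merged into one kernel-verified Lean document; each statement's English description precedes it below -/
import Mathlib

section
/- Let X be a real Banach space. Then the following are equivalent: (1) X has the strong diameter two property, i.e. every convex combination of slices of the closed unit ball B_X has diameter two; (2) for every convex combination of slices C of B_X and every ε > 0 there exists x ∈ C with ‖x‖ > 1 − ε. -/
open Metric Set

/-- A slice of the closed unit ball of `X`: the set of points of the ball where a
norm-one functional `f` is larger than `1 - α`, for some `α > 0`. -/
def IsSlice {X : Type*} [NormedAddCommGroup X] [NormedSpace ℝ X] (S : Set X) : Prop :=
  ∃ (f : X →L[ℝ] ℝ) (α : ℝ), ‖f‖ = 1 ∧ 0 < α ∧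
    S = {x : X | ‖x‖ ≤ 1 ∧ 1 - α < f x}

/-- A convex combination of slices of the closed unit ball of `X`. -/
def IsCCS {X : Type*} [NormedAddCommGroup X] [NormedSpace ℝ X] (C : Set X) : Prop :=
  ∃ (n : ℕ) (lam : Fin n → ℝ) (S : Fin n → Set X),
    0 < n ∧ (∀ i, 0 ≤ lam i ∧ lam i ≤ 1) ∧ (∑ i, lam i) = 1 ∧
    (∀ i, IsSlice (S i)) ∧
    C = {z : X | ∃ x : Fin n → X, (∀ i, x i ∈ S i) ∧ z = ∑ i, lam i • x i}

/-!
A convex combination of slices lies in the unit ball, so diameter two forces points of norm close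
to one. Conversely, if `C = ∑ λᵢ Sᵢ` then `½ C + ½ (-C)` is again a convex combination of slices
(of the `Sᵢ` and the opposite slices `-Sᵢ`), and its elements are the points `(x - y) / 2` with
`x, y ∈ C`; one of them of norm close to one gives `x, y ∈ C` at distance close to two.
-/

open scoped Pointwise

theorem Set.setOf_sum_smul_eq_sum_smul_set {ι R M : Type*} [Fintype ι] [AddCommMonoid M]
    [SMul R M] (c : ι → R) (S : ι → Set M) :
    {z | ∃ x : ι → M, (∀ i, x i ∈ S i) ∧ z = ∑ i, c i • x i} = ∑ i, c i • S i := by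
  ext z
  simp only [mem_ofPred_eq, mem_fintype_sum, mem_smul_set]
  constructor
  · rintro ⟨x, hx, rfl⟩
    exact ⟨fun i => c i • x i, fun i => ⟨x i, hx i, rfl⟩, rfl⟩
  · rintro ⟨g, hg, rfl⟩
    choose x hx hxg using hg
    exact ⟨x, hx, by simp only [hxg]⟩

section

variable {X : Type*} [NormedAddCommGroup X] [NormedSpace ℝ X] {S C C' : Set X}

theorem isCCS_iff : IsCCS C ↔ ∃ (n : ℕ) (lam : Fin n → ℝ) (S : Fin n → Set X),
    0 < n ∧ (∀ i, 0 ≤ lam i ∧ lam i ≤ 1) ∧ (∑ i, lam i) = 1 ∧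
    (∀ i, IsSlice (S i)) ∧ C = ∑ i, lam i • S i := by
  simp only [IsCCS, Set.setOf_sum_smul_eq_sum_smul_set]

theorem IsSlice.subset_closedBall (hS : IsSlice S) : S ⊆ closedBall 0 1 := by
  obtain ⟨f, α, -, -, rfl⟩ := hS
  exact fun x hx => mem_closedBall_zero_iff.2 hx.1

theorem IsSlice.neg (hS : IsSlice S) : IsSlice (-S) := by
  obtain ⟨f, α, hf, hα, rfl⟩ := hS
  refine ⟨-f, α, by rw [norm_neg, hf], hα, ?_⟩
  ext x
  simp

theorem IsCCS.subset_closedBall (hC : IsCCS C) : C ⊆ closedBall 0 1 := by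
  obtain ⟨n, lam, S, -, hlam, hsum, hS, rfl⟩ := hC
  rintro z ⟨x, hx, rfl⟩
  exact (convex_closedBall 0 1).sum_mem (fun i _ => (hlam i).1) hsum
    fun i _ => (hS i).subset_closedBall (hx i)

theorem IsCCS.neg (hC : IsCCS C) : IsCCS (-C) := by
  obtain ⟨n, lam, S, hn, hlam, hsum, hS, rfl⟩ := isCCS_iff.1 hC
  refine isCCS_iff.2 ⟨n, lam, fun i => -S i, hn, hlam, hsum, fun i => (hS i).neg, ?_⟩
  simp only [← Finset.sum_neg_distrib, smul_set_neg]

theorem IsCCS.smul_add_smul (hC : IsCCS C) (hC' : IsCCS C') {t : ℝ} (ht₀ : 0 ≤ t)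
    (ht₁ : t ≤ 1) : IsCCS (t • C + (1 - t) • C') := by
  obtain ⟨n, lam, S, hn, hlam, hsum, hS, rfl⟩ := isCCS_iff.1 hC
  obtain ⟨m, lam', S', -, hlam', hsum', hS', rfl⟩ := isCCS_iff.1 hC'
  have hweight {s : ℝ} (hs₀ : 0 ≤ s) (hs₁ : s ≤ 1) {l : ℝ} (hl : 0 ≤ l ∧ l ≤ 1) :
      0 ≤ s * l ∧ s * l ≤ 1 :=
    ⟨mul_nonneg hs₀ hl.1, mul_le_one₀ hs₁ hl.1 hl.2⟩
  refine isCCS_iff.2 ⟨n + m, Fin.append (fun i => t * lam i) (fun j => (1 - t) * lam' j),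
    Fin.append S S', by omega,
    Fin.addCases (fun i => by simpa using hweight ht₀ ht₁ (hlam i))
      (fun j => by simpa using hweight (by linarith) (by linarith) (hlam' j)), ?_,
    Fin.addCases (fun i => by simpa using hS i) (fun j => by simpa using hS' j), ?_⟩
  · simp only [Fin.sum_univ_add, Fin.append_left, Fin.append_right, ← Finset.mul_sum, hsum,
      hsum']
    ring
  · simp only [Fin.sum_univ_add, Fin.append_left, Fin.append_right, Finset.smul_sum, smul_smul]

end

theorem exists_lt_norm_of_two_mul_lt_diam {E : Type*} [SeminormedAddCommGroup E] {s : Set E}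
    {r : ℝ} (hs : s.Nonempty) (h : 2 * r < diam s) : ∃ x ∈ s, r < ‖x‖ := by
  by_contra! hle
  have hr : 0 ≤ r := (norm_nonneg _).trans (hle _ hs.some_mem)
  exact h.not_ge <|
    diam_le_of_subset_closedBall hr fun x hx => mem_closedBall_zero_iff.2 (hle x hx)

theorem diam_eq_two_mul_of_forall_lt_dist {α : Type*} [PseudoMetricSpace α] {s : Set α} {c : α}
    {r : ℝ} (hr : 0 ≤ r) (hs : s ⊆ closedBall c r)
    (h : ∀ ε > 0, ∃ x ∈ s, ∃ y ∈ s, 2 * r - ε < dist x y) : diam s = 2 * r := by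
  refine le_antisymm (diam_le_of_subset_closedBall hr hs) (le_of_forall_sub_le fun ε hε => ?_)
  obtain ⟨x, hx, y, hy, hxy⟩ := h ε hε
  exact hxy.le.trans (dist_le_diam_of_mem (isBounded_closedBall.subset hs) hx hy)

theorem sd2p_iff_norm_almost_one_general
    {X : Type*} [NormedAddCommGroup X] [NormedSpace ℝ X] :
    (∀ C : Set X, IsCCS C → Metric.diam C = 2) ↔
      (∀ C : Set X, IsCCS C → ∀ ε : ℝ, 0 < ε → ∃ x ∈ C, 1 - ε < ‖x‖) := by
  constructor
  · intro h C hC ε hε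
    have hne : C.Nonempty := by
      rw [nonempty_iff_ne_empty]
      rintro rfl
      simpa using h ∅ hC
    exact exists_lt_norm_of_two_mul_lt_diam hne (by linarith [h C hC])
  · intro h C hC
    have hfar : ∀ ε > 0, ∃ x ∈ C, ∃ y ∈ C, 2 * 1 - ε < dist x y := by
      intro ε hε
      obtain ⟨_, ⟨_, ⟨x, hx, rfl⟩, _, ⟨y, hy, rfl⟩, rfl⟩, hxy⟩ :=
        h _ (hC.smul_add_smul hC.neg (t := 1 / 2) (by norm_num) (by norm_num)) (ε / 2)
          (by positivity)
      refine ⟨x, hx, -y, hy, ?_⟩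
      have hmid : (1 / 2 : ℝ) • x + (1 - 1 / 2 : ℝ) • y = (1 / 2 : ℝ) • (x - -y) := by module
      beta_reduce at hxy
      rw [hmid, norm_smul, ← dist_eq_norm] at hxy
      norm_num at hxy
      linarith
    simpa using diam_eq_two_mul_of_forall_lt_dist zero_le_one hC.subset_closedBall hfar

theorem sd2p_iff_norm_almost_one
    {X : Type*} [NormedAddCommGroup X] [NormedSpace ℝ X] [CompleteSpace X] :
    (∀ C : Set X, IsCCS C → Metric.diam C = 2) ↔
      (∀ C : Set X, IsCCS C → ∀ ε : ℝ, 0 < ε → ∃ x ∈ C, 1 - ε < ‖x‖) :=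
  sd2p_iff_norm_almost_one_general
end

section
/- Let X and Y be real Banach spaces such that every convex combination of slices of the closed unit ball B_X intersects the unit sphere S_X and every convex combination of slices of the closed unit ball B_Y intersects the unit sphere S_Y. Let B denote the unit ball {z ∈ X ⊗ Y : ‖z‖_π ≤ 1} of the algebraic tensor product X ⊗ Y equipped with the projective tensor norm. Then for every n ≥ 1, every λ_1, …, λ_n ∈ [0,1] with Σ_{i=1}^n λ_i = 1, every α > 0, and all continuous bilinear forms T_1, …, T_n : X × Y → ℝ of norm one, the set Σ_{i=1}^n λ_i {z ∈ B : T̂_i(z) > 1 − α} (where T̂_i : X ⊗ Y → ℝ is the linear map induced by T_i) contains an element of projective tensor norm equal to 1. -/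
open Metric Set TensorProduct

/-- The projective tensor norm of an element of the algebraic tensor product `X ⊗ Y`:
the infimum of `∑ ‖u i‖ * ‖v i‖` over all finite representations `z = ∑ u i ⊗ v i`. -/
noncomputable def projNorm {X Y : Type*} [NormedAddCommGroup X] [NormedSpace ℝ X]
    [NormedAddCommGroup Y] [NormedSpace ℝ Y] (z : X ⊗[ℝ] Y) : ℝ :=
  sInf {r : ℝ | ∃ (m : ℕ) (u : Fin m → X) (v : Fin m → Y),
    z = ∑ i, u i ⊗ₜ[ℝ] v i ∧ r = ∑ i, ‖u i‖ * ‖v i‖}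

/-- The linear map `X ⊗ Y →ₗ ℝ` induced by a continuous bilinear form
`T : X →L[ℝ] Y →L[ℝ] ℝ`. -/
noncomputable def inducedLinearMap {X Y : Type*} [NormedAddCommGroup X] [NormedSpace ℝ X]
    [NormedAddCommGroup Y] [NormedSpace ℝ Y] (T : X →L[ℝ] Y →L[ℝ] ℝ) :
    X ⊗[ℝ] Y →ₗ[ℝ] ℝ :=
  TensorProduct.lift ((ContinuousLinearMap.coeLM ℝ).comp T.toLinearMap)

/-!
Choose `a i, b i` in the unit balls with `T i (a i) (b i)` close to `1`. Applying the hypothesis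
on `X` to the slices defined by the functionals `T i · (b i)` gives `x i` with `‖∑ λ i • x i‖ = 1`
and `T i (x i) (b i)` still close to `1`; applying the hypothesis on `Y` to the slices defined by
`T i (x i)` then gives `y i` with `‖∑ λ i • y i‖ = 1` and `T i (x i) (y i) > 1 - α`. The
projective norm of `∑ λ i • x i ⊗ y i` is at most `1` by the triangle inequality, and at least `1`
by testing against `f ⊗ g`, where `f` and `g` norm `∑ λ i • x i` and `∑ λ i • y i`: since
`f (x i), g (y i) ≤ 1`, we have `f (x i) * g (y i) ≥ f (x i) + g (y i) - 1`.
-/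

section Slices

variable {X : Type*} [NormedAddCommGroup X] [NormedSpace ℝ X]

lemma ContinuousLinearMap.exists_lt_apply_of_lt_opNorm_real (φ : X →L[ℝ] ℝ) {r : ℝ}
    (hr : r < ‖φ‖) : ∃ x, ‖x‖ < 1 ∧ r < φ x := by
  obtain ⟨x, hx, hφx⟩ := φ.exists_lt_apply_of_lt_opNorm hr
  rcases lt_abs.mp hφx with h | h
  · exact ⟨x, hx, h⟩
  · exact ⟨-x, by rwa [norm_neg], by rwa [map_neg]⟩

lemma ContinuousLinearMap.lt_opNorm_of_lt_apply {φ : X →L[ℝ] ℝ} {x : X} {r : ℝ}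
    (hx : ‖x‖ ≤ 1) (h : r < φ x) : r < ‖φ‖ :=
  calc r < φ x := h
    _ ≤ ‖φ x‖ := Real.le_norm_self _
    _ ≤ ‖φ‖ * 1 := φ.le_opNorm_of_le hx
    _ = ‖φ‖ := mul_one _

lemma ContinuousLinearMap.apply_le_one {φ : X →L[ℝ] ℝ} (hφ : ‖φ‖ ≤ 1) {x : X} (hx : ‖x‖ ≤ 1) :
    φ x ≤ 1 :=
  calc φ x ≤ ‖φ x‖ := Real.le_norm_self _
    _ ≤ ‖φ‖ * 1 := φ.le_opNorm_of_le hx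
    _ ≤ 1 := by rwa [mul_one]

lemma isSlice_setOf_normalized {φ : X →L[ℝ] ℝ} (hφ : ‖φ‖ ≠ 0) {ε : ℝ} (hε : 0 < ε) :
    IsSlice {x : X | ‖x‖ ≤ 1 ∧ 1 - ε < (‖φ‖⁻¹ • φ) x} :=
  ⟨‖φ‖⁻¹ • φ, ε, by rw [norm_smul, norm_inv, norm_norm, inv_mul_cancel₀ hφ], hε, rfl⟩

lemma exists_norm_sum_smul_eq_one_of_slices
    (hX : ∀ C : Set X, IsCCS C → (C ∩ sphere (0 : X) 1).Nonempty)
    {n : ℕ} (hn : 0 < n) {lam : Fin n → ℝ} (hlam : ∀ i, 0 ≤ lam i ∧ lam i ≤ 1)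
    (hsum : ∑ i, lam i = 1) {ε c : ℝ} (hε : 0 < ε) (hε1 : ε ≤ 1) (hc : 0 ≤ c)
    {φ : Fin n → X →L[ℝ] ℝ} (hφ : ∀ i, c < ‖φ i‖) :
    ∃ x : Fin n → X, (∀ i, ‖x i‖ ≤ 1 ∧ c * (1 - ε) < φ i (x i)) ∧
      ‖∑ i, lam i • x i‖ = 1 := by
  have hφ0 : ∀ i, 0 < ‖φ i‖ := fun i => hc.trans_lt (hφ i)
  obtain ⟨-, ⟨x, hx, rfl⟩, hxs⟩ := hX _ ⟨n, lam, _, hn, hlam, hsum,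
    fun i => isSlice_setOf_normalized (hφ0 i).ne' hε, rfl⟩
  refine ⟨x, fun i => ⟨(hx i).1, ?_⟩, mem_sphere_zero_iff_norm.mp hxs⟩
  have hslice : 1 - ε < ‖φ i‖⁻¹ * φ i (x i) := (hx i).2
  rw [inv_mul_eq_div, lt_div_iff₀ (hφ0 i)] at hslice
  calc c * (1 - ε) ≤ ‖φ i‖ * (1 - ε) := mul_le_mul_of_nonneg_right (hφ i).le (by linarith)
    _ < φ i (x i) := by linarith

end Slices

section ProjNorm

variable {X Y : Type*} [NormedAddCommGroup X] [NormedSpace ℝ X]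
  [NormedAddCommGroup Y] [NormedSpace ℝ Y]

lemma ContinuousLinearMap.exists_lt_apply_apply_of_lt_opNorm (T : X →L[ℝ] Y →L[ℝ] ℝ) {r : ℝ}
    (hr : r < ‖T‖) : ∃ a b, ‖a‖ ≤ 1 ∧ ‖b‖ ≤ 1 ∧ r < T a b := by
  obtain ⟨a, ha, hTa⟩ := T.exists_lt_apply_of_lt_opNorm hr
  obtain ⟨b, hb, hTab⟩ := (T a).exists_lt_apply_of_lt_opNorm_real hTa
  exact ⟨a, b, ha.le, hb.le, hTab⟩

lemma bddBelow_projNorm_set (z : X ⊗[ℝ] Y) :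
    BddBelow {r : ℝ | ∃ (m : ℕ) (u : Fin m → X) (v : Fin m → Y),
      z = ∑ i, u i ⊗ₜ[ℝ] v i ∧ r = ∑ i, ‖u i‖ * ‖v i‖} := by
  refine ⟨0, ?_⟩
  rintro r ⟨m, u, v, -, rfl⟩
  positivity

lemma projNorm_sum_tmul_le {m : ℕ} (u : Fin m → X) (v : Fin m → Y) :
    projNorm (∑ i, u i ⊗ₜ[ℝ] v i) ≤ ∑ i, ‖u i‖ * ‖v i‖ :=
  csInf_le (bddBelow_projNorm_set _) ⟨m, u, v, rfl, rfl⟩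

lemma projNorm_tmul_le (x : X) (y : Y) : projNorm (x ⊗ₜ[ℝ] y) ≤ ‖x‖ * ‖y‖ := by
  simpa using projNorm_sum_tmul_le ![x] ![y]

lemma exists_eq_sum_tmul (z : X ⊗[ℝ] Y) :
    ∃ (m : ℕ) (u : Fin m → X) (v : Fin m → Y), z = ∑ i, u i ⊗ₜ[ℝ] v i := by
  induction z using TensorProduct.induction_on with
  | zero => exact ⟨0, ![], ![], by simp⟩
  | tmul x y => exact ⟨1, ![x], ![y], by simp⟩
  | add z₁ z₂ h₁ h₂ =>
    obtain ⟨m₁, u₁, v₁, rfl⟩ := h₁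
    obtain ⟨m₂, u₂, v₂, rfl⟩ := h₂
    exact ⟨m₁ + m₂, Fin.append u₁ u₂, Fin.append v₁ v₂, by simp [Fin.sum_univ_add]⟩

lemma inducedLinearMap_tmul (T : X →L[ℝ] Y →L[ℝ] ℝ) (x : X) (y : Y) :
    inducedLinearMap T (x ⊗ₜ[ℝ] y) = T x y := rfl

lemma inducedLinearMap_le_projNorm {T : X →L[ℝ] Y →L[ℝ] ℝ} (hT : ‖T‖ ≤ 1) (z : X ⊗[ℝ] Y) :
    inducedLinearMap T z ≤ projNorm z := by
  obtain ⟨m, u, v, hz⟩ := exists_eq_sum_tmul z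
  refine le_csInf ⟨_, m, u, v, hz, rfl⟩ ?_
  rintro r ⟨m', u', v', rfl, rfl⟩
  rw [map_sum]
  refine Finset.sum_le_sum fun i _ => ?_
  calc T (u' i) (v' i) ≤ ‖T (u' i) (v' i)‖ := Real.le_norm_self _
    _ ≤ ‖T‖ * ‖u' i‖ * ‖v' i‖ := T.le_opNorm₂ _ _
    _ ≤ ‖u' i‖ * ‖v' i‖ := by gcongr; exact mul_le_of_le_one_left (norm_nonneg _) hT

variable {n : ℕ} {lam : Fin n → ℝ} {x : Fin n → X} {y : Fin n → Y}

lemma projNorm_sum_smul_tmul_le_one (hlam : ∀ i, 0 ≤ lam i) (hsum : ∑ i, lam i = 1)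
    (hx : ∀ i, ‖x i‖ ≤ 1) (hy : ∀ i, ‖y i‖ ≤ 1) :
    projNorm (∑ i, lam i • x i ⊗ₜ[ℝ] y i) ≤ 1 := by
  simp_rw [smul_tmul']
  refine (projNorm_sum_tmul_le _ _).trans (hsum ▸ Finset.sum_le_sum fun i _ => ?_)
  rw [norm_smul, Real.norm_of_nonneg (hlam i), mul_assoc]
  exact mul_le_of_le_one_right (hlam i) (mul_le_one₀ (hx i) (norm_nonneg _) (hy i))

lemma one_le_projNorm_sum_smul_tmul (hlam : ∀ i, 0 ≤ lam i) (hsum : ∑ i, lam i = 1)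
    (hx : ∀ i, ‖x i‖ ≤ 1) (hy : ∀ i, ‖y i‖ ≤ 1)
    (hxs : ‖∑ i, lam i • x i‖ = 1) (hys : ‖∑ i, lam i • y i‖ = 1) :
    1 ≤ projNorm (∑ i, lam i • x i ⊗ₜ[ℝ] y i) := by
  obtain ⟨f, hf, hfx⟩ := exists_dual_vector ℝ (∑ i, lam i • x i) fun h => by simp [h] at hxs
  obtain ⟨g, hg, hgy⟩ := exists_dual_vector ℝ (∑ i, lam i • y i) fun h => by simp [h] at hys
  have hfx1 : ∑ i, lam i * f (x i) = 1 := by simpa [hxs] using hfx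
  have hgy1 : ∑ i, lam i * g (y i) = 1 := by simpa [hys] using hgy
  have hprod : ∀ i, f (x i) + g (y i) - 1 ≤ f (x i) * g (y i) := fun i => by
    nlinarith [f.apply_le_one hf.le (hx i), g.apply_le_one hg.le (hy i)]
  calc (1 : ℝ) = ∑ i, lam i * (f (x i) + g (y i) - 1) := by
        simp only [mul_sub, mul_add, mul_one, Finset.sum_sub_distrib, Finset.sum_add_distrib,
          hfx1, hgy1, hsum]
        norm_num
    _ ≤ ∑ i, lam i * (f (x i) * g (y i)) :=
        Finset.sum_le_sum fun i _ => mul_le_mul_of_nonneg_left (hprod i) (hlam i)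
    _ = inducedLinearMap (f.smulRight g) (∑ i, lam i • x i ⊗ₜ[ℝ] y i) := by
        simp [inducedLinearMap_tmul]
    _ ≤ _ := inducedLinearMap_le_projNorm (by rw [f.norm_smulRight_apply, hf, hg, one_mul]) _

end ProjNorm

theorem ccs_of_projective_tensor_ball_contains_norm_one_general
    {X Y : Type*} [NormedAddCommGroup X] [NormedSpace ℝ X]
    [NormedAddCommGroup Y] [NormedSpace ℝ Y]
    (hX : ∀ C : Set X, IsCCS C → (C ∩ sphere (0 : X) 1).Nonempty)
    (hY : ∀ C : Set Y, IsCCS C → (C ∩ sphere (0 : Y) 1).Nonempty)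
    (n : ℕ) (hn : 0 < n) (lam : Fin n → ℝ) (hlam : ∀ i, 0 ≤ lam i ∧ lam i ≤ 1)
    (hsum : ∑ i, lam i = 1) (α : ℝ) (hα : 0 < α)
    (T : Fin n → (X →L[ℝ] Y →L[ℝ] ℝ)) (hT : ∀ i, ‖T i‖ = 1) :
    ∃ z : Fin n → (X ⊗[ℝ] Y),
      (∀ i, projNorm (z i) ≤ 1 ∧ 1 - α < inducedLinearMap (T i) (z i)) ∧
      projNorm (∑ i, lam i • z i) = 1 := by
  obtain ⟨ε, hε, hε1, hcube⟩ : ∃ ε : ℝ, 0 < ε ∧ ε ≤ 1 ∧ 1 - α ≤ (1 - ε) ^ 3 := by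
    set m := min α 1
    have hm : 0 < m := lt_min hα one_pos
    have hm1 : m ≤ 1 := min_le_right α 1
    refine ⟨m / 3, by positivity, by linarith, ?_⟩
    nlinarith [min_le_left α 1, mul_nonneg (sq_nonneg m) (by linarith : (0 : ℝ) ≤ 9 - m)]
  choose a b ha hb hab using fun i =>
    (T i).exists_lt_apply_apply_of_lt_opNorm (r := 1 - ε) (by rw [hT i]; linarith)
  obtain ⟨x, hx, hxs⟩ := exists_norm_sum_smul_eq_one_of_slices hX hn hlam hsum hε hε1
    (sub_nonneg.mpr hε1) (φ := fun i => (T i).flip (b i))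
    fun i => ContinuousLinearMap.lt_opNorm_of_lt_apply (ha i) (hab i)
  obtain ⟨y, hy, hys⟩ := exists_norm_sum_smul_eq_one_of_slices hY hn hlam hsum hε hε1
    (mul_self_nonneg _) (φ := fun i => T i (x i))
    fun i => ContinuousLinearMap.lt_opNorm_of_lt_apply (hb i) (hx i).2
  refine ⟨fun i => x i ⊗ₜ[ℝ] y i, fun i => ⟨?_, ?_⟩, le_antisymm ?_ ?_⟩
  · exact (projNorm_tmul_le _ _).trans (mul_le_one₀ (hx i).1 (norm_nonneg _) (hy i).1)
  · rw [inducedLinearMap_tmul]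
    exact hcube.trans_lt (by simpa [pow_succ] using (hy i).2)
  · exact projNorm_sum_smul_tmul_le_one (fun i => (hlam i).1) hsum (fun i => (hx i).1)
      (fun i => (hy i).1)
  · exact one_le_projNorm_sum_smul_tmul (fun i => (hlam i).1) hsum (fun i => (hx i).1)
      (fun i => (hy i).1) hxs hys

theorem ccs_of_projective_tensor_ball_contains_norm_one
    {X Y : Type*} [NormedAddCommGroup X] [NormedSpace ℝ X] [CompleteSpace X]
    [NormedAddCommGroup Y] [NormedSpace ℝ Y] [CompleteSpace Y]
    (hX : ∀ C : Set X, IsCCS C → (C ∩ sphere (0 : X) 1).Nonempty)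
    (hY : ∀ C : Set Y, IsCCS C → (C ∩ sphere (0 : Y) 1).Nonempty)
    (n : ℕ) (hn : 0 < n) (lam : Fin n → ℝ) (hlam : ∀ i, 0 ≤ lam i ∧ lam i ≤ 1)
    (hsum : ∑ i, lam i = 1) (α : ℝ) (hα : 0 < α)
    (T : Fin n → (X →L[ℝ] Y →L[ℝ] ℝ)) (hT : ∀ i, ‖T i‖ = 1) :
    ∃ z : Fin n → (X ⊗[ℝ] Y),
      (∀ i, projNorm (z i) ≤ 1 ∧ 1 - α < inducedLinearMap (T i) (z i)) ∧
      projNorm (∑ i, lam i • z i) = 1 :=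
  ccs_of_projective_tensor_ball_contains_norm_one_general hX hY n hn lam hlam hsum α hα T hT
end
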